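/- The asymptotic growth constant of the spanning trees of the sequence {B_n} of Schreier graphs of the Basilica group equals (2/3)·log 2; that is, lim_{n→∞} (log τ(B_n)) / |V(B_n)| = (2/3)·log 2, where |V(B_n)| = 2^n and τ(B_n) is the number of spanning trees of B_n. -/

import Mathlib

/-- A finite multigraph on a vertex set `V`: a finite edge type together with an
incidence map assigning to each edge its unordered pair of endpoints
(loops and parallel edges are allowed). -/
structure Multigraph (V : Type) where
  /-- the type of edges -/
  Edge : Type
  /-- the edge type is finite -/
  fintypeEdge : Fintype Edge
  /-- equality of edges is decidable -/
  decEqEdge : DecidableEq Edge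
  /-- the unordered pair of endpoints of an edge -/
  inc : Edge → Sym2 V

attribute [instance] Multigraph.fintypeEdge Multigraph.decEqEdge

namespace Multigraph

variable {V : Type} [Fintype V] [DecidableEq V]

/-- The simple graph underlying the spanning subgraph of `G` with edge set `A`:
two distinct vertices are adjacent iff some edge in `A` has them as endpoints. -/
def toSimple (G : Multigraph V) (A : Finset G.Edge) : SimpleGraph V :=
  SimpleGraph.fromRel fun u v => ∃ e ∈ A, G.inc e = s(u, v)

/-- `G.comps A` is the number `k(A)` of connected components of the spanning
subgraph of `G` with edge set `A`. -/
noncomputable def comps (G : Multigraph V) (A : Finset G.Edge) : ℕ :=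
  Nat.card (G.toSimple A).ConnectedComponent

/-- The rank `r(A) = |V| - k(A)` of the spanning subgraph with edge set `A`. -/
noncomputable def rk (G : Multigraph V) (A : Finset G.Edge) : ℕ :=
  Fintype.card V - G.comps A

/-- The nullity `n(A) = |E(A)| - r(A)` of the spanning subgraph with edge set `A`. -/
noncomputable def nullity (G : Multigraph V) (A : Finset G.Edge) : ℕ :=
  A.card - G.rk A

/-- The Tutte polynomial
`T(G; x, y) = ∑_{A ⊆ E} (x - 1) ^ (r(E) - r(A)) * (y - 1) ^ n(A)`,
as a function of two real variables. -/
noncomputable def tutte (G : Multigraph V) (x y : ℝ) : ℝ :=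
  ∑ A ∈ (Finset.univ : Finset G.Edge).powerset,
    (x - 1) ^ (G.rk Finset.univ - G.rk A) * (y - 1) ^ (G.nullity A)

/-- The reliability polynomial `R(G, p)`: the probability that, when each edge is
independently active with probability `p`, every pair of vertices is joined by a
path of active edges (i.e. the spanning subgraph of active edges is connected). -/
noncomputable def reliability (G : Multigraph V) (p : ℝ) : ℝ :=
  ∑ A ∈ (Finset.univ : Finset G.Edge).powerset,
    if G.comps A = 1 then p ^ A.card * (1 - p) ^ (Fintype.card G.Edge - A.card) else 0

/-- The complexity `τ(G)`: the number of spanning subtrees of `G`, i.e. spanning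
subgraphs which are connected and have `|V| - 1` edges. -/
noncomputable def treeCount (G : Multigraph V) : ℕ :=
  Nat.card {A : Finset G.Edge // G.comps A = 1 ∧ A.card + 1 = Fintype.card V}

/-- The number of connected spanning subgraphs of `G`. -/
noncomputable def connCount (G : Multigraph V) : ℕ :=
  Nat.card {A : Finset G.Edge // G.comps A = 1}

/-- The number of spanning forests of `G`: spanning subgraphs containing no cycle,
i.e. with `|E(A)| = |V| - k(A)` (zero nullity). -/
noncomputable def forestCount (G : Multigraph V) : ℕ :=
  Nat.card {A : Finset G.Edge // A.card + G.comps A = Fintype.card V}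

/-- `σ` is an orientation of `G` if it assigns to every edge an ordered pair of
vertices whose underlying unordered pair is the pair of endpoints of the edge. -/
def IsOrientation (G : Multigraph V) (σ : G.Edge → V × V) : Prop :=
  ∀ e, s((σ e).1, (σ e).2) = G.inc e

/-- The number of acyclic orientations of `G`: orientations admitting no directed
cycle. -/
noncomputable def acyclicOrientationCount (G : Multigraph V) : ℕ :=
  Nat.card {σ : G.Edge → V × V //
    G.IsOrientation σ ∧ ∀ v : V, ¬ Relation.TransGen (fun u w => ∃ e, σ e = (u, w)) v v}

/-- A proper coloring of `G`: the two endpoints of every edge receive distinct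
colors. -/
def ProperColoring (G : Multigraph V) {α : Type} (c : V → α) : Prop :=
  ∀ e, ¬ (Sym2.map c (G.inc e)).IsDiag

/-- The number of proper colorings of `G` with `k` colors (the value `χ(G, k)` of
the chromatic polynomial at the natural number `k`). -/
noncomputable def chromCount (G : Multigraph V) (k : ℕ) : ℕ :=
  Nat.card {c : V → Fin k // G.ProperColoring c}

end Multigraph

mutual
  /-- The generator `a = e(b, id)` of the Basilica group, acting on the `n`-th
  level of the binary rooted tree: `a(1w) = 1w` and `a(0w) = 0 b(w)`. -/
  def basA : (n : ℕ) → (Fin n → Bool) → (Fin n → Bool)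
    | 0, v => v
    | n + 1, v =>
      match v 0 with
      | true => v
      | false => Fin.cons false (basB n (Fin.tail v))

  /-- The generator `b = ε(a, id)` of the Basilica group, acting on the `n`-th
  level of the binary rooted tree: `b(1w) = 0w` and `b(0w) = 1 a(w)`. -/
  def basB : (n : ℕ) → (Fin n → Bool) → (Fin n → Bool)
    | 0, v => v
    | n + 1, v =>
      match v 0 with
      | true => Fin.cons false (Fin.tail v)
      | false => Fin.cons true (basA n (Fin.tail v))
end

/-- The generator of the Basilica group indexed by a boolean tag. -/
def basGen (n : ℕ) : Bool → (Fin n → Bool) → (Fin n → Bool)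
  | true => basA n
  | false => basB n

/-- The level-`n` Schreier graph `B_n` of the Basilica group: vertices are the
binary words of length `n`, and for each generator `s ∈ {a, b}` and each vertex
`v` there is one edge joining `v` and `s(v)` (a loop when `s(v) = v`). -/
def basilica (n : ℕ) : Multigraph (Fin n → Bool) where
  Edge := Bool × (Fin n → Bool)
  fintypeEdge := inferInstance
  decEqEdge := inferInstance
  inc := fun e => s(e.2, basGen n e.1 e.2)

/-!
`B_n` is a cactus: the edges labelled `s` form the cycles of the permutation `s` of the
level (a fixed point giving a loop), and `|E| + 1 = |V| + #cycles`. Hence a spanning tree is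
exactly the complement of a set picking one edge from every cycle, and `τ(B_n)` is the
product of all cycle lengths of `a` and `b`. The self-similar recursion `a = (b, 1)`,
`b = ε (a, 1)` turns a cycle of `a` on level `n` into one of `b` on level `n + 1` of twice
the length, and a cycle of `b` into one of `a` of the same length, plus `2 ^ n` fixed points.
So `τ(B_n) = 2 ^ S_n` with `S_n = ∑_{i < n} #cycles(a_i)` and
`6 S_n = 2 ^ (n + 2) + 3 n - 4 - (n mod 2)`.
-/

namespace Equiv.Perm

variable {α β : Type*}

/-- The cycles of `σ`, fixed points included as cycles of length one. -/
abbrev Cycles (σ : Perm α) : Type _ := Quotient (SameCycle.setoid σ)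

@[simp] theorem Cycles.mk_eq_mk {σ : Perm α} {x y : α} :
    (⟦x⟧ : σ.Cycles) = ⟦y⟧ ↔ σ.SameCycle x y :=
  Quotient.eq

noncomputable instance [Finite α] (σ : Perm α) : Fintype σ.Cycles := Fintype.ofFinite _

noncomputable def numCycles (σ : Perm α) : ℕ := Nat.card σ.Cycles

noncomputable def cycleLengthProd [Finite α] (σ : Perm α) : ℕ :=
  ∏ c : σ.Cycles, Nat.card {x // ⟦x⟧ = c}

theorem SameCycle.rel [Finite α] {σ : Perm α} {r : α → α → Prop} (hr : Equivalence r)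
    (hσ : ∀ x, r x (σ x)) {x y : α} (h : σ.SameCycle x y) : r x y := by
  obtain ⟨k, rfl⟩ := h.exists_nat_pow_eq
  clear h
  induction k with
  | zero => exact hr.refl x
  | succ k ih => exact hr.trans ih (by rw [pow_succ', mul_apply]; exact hσ _)

section Cover

variable {σ : Perm α} {τ : Perm β} (p : β → α) (hp : Function.Surjective p)
  (h : ∀ u v, τ.SameCycle u v ↔ σ.SameCycle (p u) (p v))
include hp h

noncomputable def cyclesEquivOfSameCycleIff : τ.Cycles ≃ σ.Cycles :=
  Equiv.ofBijective (Quotient.map' p fun u v => (h u v).1) <| by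
    refine ⟨?_, ?_⟩
    · rintro ⟨u⟩ ⟨v⟩ huv
      exact Quotient.sound ((h u v).2 (Quotient.exact huv))
    · rintro ⟨x⟩
      obtain ⟨u, rfl⟩ := hp x
      exact ⟨⟦u⟧, rfl⟩

theorem numCycles_eq_of_sameCycle_iff : τ.numCycles = σ.numCycles :=
  Nat.card_congr (cyclesEquivOfSameCycleIff p hp h)

theorem cycleLengthProd_eq_of_sameCycle_iff [Finite α] [Finite β] {m : ℕ}
    (hm : ∀ x, Nat.card {u // p u = x} = m) :
    τ.cycleLengthProd = m ^ σ.numCycles * σ.cycleLengthProd := by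
  have hfiber (Q : α → Prop) : Nat.card {u // Q (p u)} = m * Nat.card {x // Q x} := by
    classical
    have := Fintype.ofFinite α
    rw [← Nat.card_congr (sigmaSubtypeFiberEquivSubtype p fun _ => Iff.rfl), Nat.card_sigma]
    simp only [hm, Finset.sum_const, Finset.card_univ, smul_eq_mul, Nat.card_eq_fintype_card]
    ring
  rw [cycleLengthProd, cycleLengthProd, numCycles, Nat.card_eq_fintype_card, ← Finset.card_univ,
    ← Finset.prod_const, ← Finset.prod_mul_distrib]
  refine Fintype.prod_equiv (cyclesEquivOfSameCycleIff p hp h) _ _ ?_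
  rintro ⟨u⟩
  change _ = m * Nat.card {x // (⟦x⟧ : σ.Cycles) = ⟦p u⟧}
  rw [← hfiber]
  exact Nat.card_congr <| subtypeEquivRight fun v =>
    Quotient.eq.trans ((h v u).trans (Quotient.eq (r := SameCycle.setoid σ)).symm)

end Cover

section Conj

variable (e : α ≃ β) (σ : Perm α)

theorem permCongr_zpow (k : ℤ) : e.permCongr σ ^ k = e.permCongr (σ ^ k) := by
  simpa using (map_zpow e.permCongrHom σ k).symm

theorem sameCycle_permCongr {u v : β} :
    (e.permCongr σ).SameCycle u v ↔ σ.SameCycle (e.symm u) (e.symm v) := by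
  simp [SameCycle, permCongr_zpow, permCongr_apply, ← e.eq_symm_apply]

theorem numCycles_permCongr : (e.permCongr σ).numCycles = σ.numCycles :=
  numCycles_eq_of_sameCycle_iff e.symm e.symm.surjective fun _ _ => sameCycle_permCongr e σ

theorem cycleLengthProd_permCongr [Finite α] [Finite β] :
    (e.permCongr σ).cycleLengthProd = σ.cycleLengthProd := by
  rw [cycleLengthProd_eq_of_sameCycle_iff e.symm e.symm.surjective
    (fun _ _ => sameCycle_permCongr e σ) (m := 1), one_pow, one_mul]
  intro x
  rw [Nat.card_congr (subtypeEquivRight fun u => e.symm_apply_eq), Nat.card_unique]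

end Conj

section Sum

variable (σ : Perm α) (τ : Perm β)

theorem sumCongr_zpow (k : ℤ) : sumCongr σ τ ^ k = sumCongr (σ ^ k) (τ ^ k) := by
  simpa using (map_zpow (sumCongrHom α β) (σ, τ) k).symm

@[simp] theorem sameCycle_sumCongr_inl {x y : α} :
    (sumCongr σ τ).SameCycle (.inl x) (.inl y) ↔ σ.SameCycle x y := by
  simp [SameCycle, sumCongr_zpow]

@[simp] theorem sameCycle_sumCongr_inr {x y : β} :
    (sumCongr σ τ).SameCycle (.inr x) (.inr y) ↔ τ.SameCycle x y := by
  simp [SameCycle, sumCongr_zpow]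

@[simp] theorem not_sameCycle_sumCongr_inl_inr {x : α} {y : β} :
    ¬ (sumCongr σ τ).SameCycle (.inl x) (.inr y) := by
  simp [SameCycle, sumCongr_zpow]

@[simp] theorem not_sameCycle_sumCongr_inr_inl {x : β} {y : α} :
    ¬ (sumCongr σ τ).SameCycle (.inr x) (.inl y) := by
  simp [SameCycle, sumCongr_zpow]

def cyclesSumCongr : (sumCongr σ τ).Cycles ≃ σ.Cycles ⊕ τ.Cycles where
  toFun := Quotient.lift (Sum.map (⟦·⟧) (⟦·⟧)) <| by
    rintro (x | x) (y | y) (hxy : SameCycle _ _ _)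
    · exact congrArg Sum.inl (Quotient.sound ((sameCycle_sumCongr_inl σ τ).1 hxy))
    · exact absurd hxy (not_sameCycle_sumCongr_inl_inr σ τ)
    · exact absurd hxy.symm (not_sameCycle_sumCongr_inl_inr σ τ)
    · exact congrArg Sum.inr (Quotient.sound ((sameCycle_sumCongr_inr σ τ).1 hxy))
  invFun := Sum.elim (Quotient.map' .inl fun _ _ => (sameCycle_sumCongr_inl σ τ).2)
    (Quotient.map' .inr fun _ _ => (sameCycle_sumCongr_inr σ τ).2)
  left_inv := by rintro ⟨x | x⟩ <;> rfl
  right_inv := by rintro (x | x) <;> induction x using Quotient.inductionOn <;> rfl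

theorem numCycles_sumCongr [Finite α] [Finite β] :
    (sumCongr σ τ).numCycles = σ.numCycles + τ.numCycles := by
  rw [numCycles, Nat.card_congr (cyclesSumCongr σ τ), Nat.card_sum]
  rfl

theorem cycleLengthProd_sumCongr [Finite α] [Finite β] :
    (sumCongr σ τ).cycleLengthProd = σ.cycleLengthProd * τ.cycleLengthProd := by
  rw [cycleLengthProd, Fintype.prod_equiv (cyclesSumCongr σ τ) _
    (Sum.elim (fun c => Nat.card {x // ⟦x⟧ = c}) (fun c => Nat.card {x // ⟦x⟧ = c})),
    Fintype.prod_sum_type]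
  · rfl
  intro c
  induction c using Quotient.inductionOn with
  | h u => rcases u with x | x <;> simp [Nat.card_congr subtypeSum, cyclesSumCongr]

theorem numCycles_one [Finite α] : numCycles (1 : Perm α) = Nat.card α :=
  (Nat.card_eq_of_bijective _ ⟨fun x y hxy => by simpa using hxy, Quotient.mk_surjective⟩).symm

theorem cycleLengthProd_one [Finite α] : cycleLengthProd (1 : Perm α) = 1 := by
  refine Finset.prod_eq_one fun c _ => ?_
  induction c using Quotient.inductionOn
  simp

end Sum

section Swap

variable (π : Perm α)

/-- `ε (π, 1)` in wreath recursion notation, where `ε` swaps the two summands. -/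
def swapSumCongr : Perm (α ⊕ α) := (sumCongr π 1).trans (sumComm α α)

@[simp] theorem swapSumCongr_inl (x : α) : swapSumCongr π (.inl x) = .inr (π x) := rfl

@[simp] theorem swapSumCongr_inr (x : α) : swapSumCongr π (.inr x) = .inl x := rfl

variable [Finite α]

theorem sameCycle_swapSumCongr {u v : α ⊕ α} :
    (swapSumCongr π).SameCycle u v ↔ π.SameCycle (Sum.elim id id u) (Sum.elim id id v) := by
  constructor
  · exact SameCycle.rel ((SameCycle.equivalence π).comap _)
      (by rintro (x | x) <;> simp [Function.onFun, SameCycle.refl])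
  · intro h
    have hinl := SameCycle.rel ((SameCycle.equivalence (swapSumCongr π)).comap Sum.inl)
      (fun x => (sameCycle_apply_right.2 (sameCycle_apply_right.2 (.refl _ _)) :
        SameCycle _ _ (swapSumCongr π (swapSumCongr π (.inl x))))) h
    have hfold (u : α ⊕ α) : (swapSumCongr π).SameCycle u (.inl (Sum.elim id id u)) := by
      rcases u with x | x
      · rfl
      · exact (sameCycle_apply_right.2 (.refl _ _) :)
    exact (hfold u).trans (hinl.trans (hfold v).symm)

theorem numCycles_swapSumCongr : (swapSumCongr π).numCycles = π.numCycles :=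
  numCycles_eq_of_sameCycle_iff _ (fun x => ⟨.inl x, rfl⟩) fun _ _ => sameCycle_swapSumCongr π

theorem cycleLengthProd_swapSumCongr :
    (swapSumCongr π).cycleLengthProd = 2 ^ π.numCycles * π.cycleLengthProd :=
  cycleLengthProd_eq_of_sameCycle_iff _ (fun x => ⟨.inl x, rfl⟩)
    (fun _ _ => sameCycle_swapSumCongr π) fun x => by simp [Nat.card_congr subtypeSum]

end Swap

end Equiv.Perm

open Finset

namespace SimpleGraph

variable {V W : Type*}

theorem Reachable.lift {G : SimpleGraph V} {H : SimpleGraph W} (f : V → W)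
    (hf : ∀ x y, G.Adj x y → H.Reachable (f x) (f y)) {x y : V} (h : G.Reachable x y) :
    H.Reachable (f x) (f y) := by
  rw [reachable_iff_reflTransGen] at h ⊢
  exact h.lift' f fun a b hab => (reachable_iff_reflTransGen _ _).1 (hf a b hab)

theorem card_connectedComponent_eq_one_iff {G : SimpleGraph V} :
    Nat.card G.ConnectedComponent = 1 ↔ G.Connected := by
  rw [Nat.card_eq_one_iff_unique, connected_iff]
  refine ⟨fun ⟨_, ⟨c⟩⟩ => ⟨fun x y => ConnectedComponent.exact (Subsingleton.elim _ _), ?_⟩,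
    fun ⟨h, _⟩ => ⟨h.subsingleton_connectedComponent, inferInstance⟩⟩
  induction c using ConnectedComponent.ind with
  | h v => exact ⟨v⟩

end SimpleGraph

theorem card_univ_image_section {α ι : Type*} [Fintype ι] [DecidableEq α] {f : α → ι}
    (g : ∀ i, {a // f a = i}) : (univ.image fun i => (g i : α)).card = Fintype.card ι :=
  card_image_of_injective _ fun i j hij => (g i).2.symm.trans ((congrArg f hij).trans (g j).2)

namespace Multigraph

variable {V : Type} (G : Multigraph V)

theorem toSimple_adj {A : Finset G.Edge} {x y : V} :
    (G.toSimple A).Adj x y ↔ x ≠ y ∧ ∃ e ∈ A, G.inc e = s(x, y) := by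
  simp [toSimple, Sym2.eq_swap (a := y)]

theorem toSimple_mono : Monotone G.toSimple := fun _ _ hAB _ _ h => by
  obtain ⟨hxy, e, he, hinc⟩ := G.toSimple_adj.1 h
  exact G.toSimple_adj.2 ⟨hxy, e, hAB he, hinc⟩

theorem reachable_toSimple_of_mem {A : Finset G.Edge} {e : G.Edge} (he : e ∈ A) {x y : V}
    (hinc : G.inc e = s(x, y)) : (G.toSimple A).Reachable x y := by
  obtain rfl | hxy := eq_or_ne x y
  · rfl
  · exact (G.toSimple_adj.2 ⟨hxy, e, he, hinc⟩).reachable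

theorem comps_eq_one_iff {A : Finset G.Edge} : G.comps A = 1 ↔ (G.toSimple A).Connected :=
  SimpleGraph.card_connectedComponent_eq_one_iff

theorem card_edgeSet_toSimple_le (A : Finset G.Edge) :
    Nat.card (G.toSimple A).edgeSet ≤ A.card := by
  have hsub : (G.toSimple A).edgeSet ⊆ G.inc '' A := by
    rintro ⟨x, y⟩ h
    obtain ⟨-, e, he, hinc⟩ := G.toSimple_adj.1 h
    exact ⟨e, he, hinc⟩
  calc Nat.card (G.toSimple A).edgeSet ≤ Nat.card (G.inc '' A) :=
        Nat.card_mono (A.finite_toSet.image _) hsub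
    _ ≤ A.card := by simpa using Set.ncard_image_le (f := G.inc) A.finite_toSet

theorem connected_erase {A : Finset G.Edge} {a : G.Edge}
    (ha : ∀ x y, G.inc a = s(x, y) → (G.toSimple (A.erase a)).Reachable x y)
    (hA : (G.toSimple A).Connected) : (G.toSimple (A.erase a)).Connected := by
  refine (SimpleGraph.connected_iff _).2 ⟨fun x y => ?_, hA.nonempty⟩
  simpa using (hA.mono (G.toSimple_mono (insert_erase_subset a A)) x y).lift id
    fun u v huv => by
      obtain ⟨-, e, he, hinc⟩ := G.toSimple_adj.1 huv
      rcases mem_insert.1 he with rfl | he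
      exacts [ha u v hinc, G.reachable_toSimple_of_mem he hinc]

def IsSpanningTree [Fintype V] (A : Finset G.Edge) : Prop :=
  G.comps A = 1 ∧ A.card + 1 = Fintype.card V

variable {ι : Type}
  {f : G.Edge → ι}
  (hcyc : ∀ e (A : Finset G.Edge), (∀ e', f e' = f e → e' ≠ e → e' ∈ A) →
    ∀ x y, G.inc e = s(x, y) → (G.toSimple A).Reachable x y)
include hcyc

theorem connected_sdiff_of_injOn (hconn : (G.toSimple univ).Connected) (S : Finset G.Edge)
    (hS : Set.InjOn f S) : (G.toSimple (univ \ S)).Connected := by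
  induction S using Finset.induction_on with
  | empty => simpa using hconn
  | insert a S ha ih =>
    rw [sdiff_insert]
    refine G.connected_erase (hcyc a _ fun e he hea => ?_) (ih (hS.mono (by simp)))
    simp only [mem_erase, mem_sdiff, mem_univ, true_and]
    exact ⟨hea, fun heS => hea (hS (by simp [heS]) (by simp) he)⟩

theorem exists_notMem_of_isSpanningTree [Fintype V] (hf : Function.Surjective f)
    {A : Finset G.Edge} (hA : G.IsSpanningTree A) (i : ι) : ∃ e ∉ A, f e = i := by
  -- Otherwise deleting an edge of the class `i` from `A` leaves a connected graph on `|V|`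
  -- vertices with `|V| - 2` edges.
  by_contra! h
  obtain ⟨a, rfl⟩ := hf i
  have haA : a ∈ A := by_contra fun haA => h a haA rfl
  have hA' : (G.toSimple (A.erase a)).Connected := by
    refine G.connected_erase (hcyc a _ fun e he hea => ?_) (G.comps_eq_one_iff.1 hA.1)
    exact mem_erase.2 ⟨hea, by_contra fun heA => h e heA he⟩
  have hV := hA'.card_vert_le_card_edgeSet_add_one
  have hE := G.card_edgeSet_toSimple_le (A.erase a)
  rw [Nat.card_eq_fintype_card (α := V)] at hV
  rw [card_erase_of_mem haA] at hE
  have := card_pos.2 ⟨a, haA⟩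
  have := hA.2
  omega

theorem isSpanningTree_compl_image [Fintype V] [Fintype ι] (hconn : (G.toSimple univ).Connected)
    (hcard : Fintype.card G.Edge + 1 = Fintype.card V + Fintype.card ι)
    (g : ∀ i, {e // f e = i}) : G.IsSpanningTree (univ.image fun i => (g i : G.Edge))ᶜ := by
  refine ⟨G.comps_eq_one_iff.2 ?_, ?_⟩
  · rw [compl_eq_univ_sdiff]
    refine G.connected_sdiff_of_injOn hcyc hconn _ ?_
    intro a ha b hb hab
    simp only [coe_image, coe_univ, Set.image_univ, Set.mem_range] at ha hb
    obtain ⟨i, rfl⟩ := ha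
    obtain ⟨j, rfl⟩ := hb
    rw [(g i).2, (g j).2] at hab
    rw [hab]
  · have := card_le_univ (univ.image fun i => (g i : G.Edge))
    rw [card_compl, card_univ_image_section] at *
    omega

theorem treeCount_eq_prod_card_fiber [Fintype V] [Fintype ι] (hf : Function.Surjective f)
    (hconn : (G.toSimple univ).Connected)
    (hcard : Fintype.card G.Edge + 1 = Fintype.card V + Fintype.card ι) :
    G.treeCount = ∏ i, Nat.card {e // f e = i} := by
  let T (g : ∀ i, {e // f e = i}) : Finset G.Edge := univ.image fun i => (g i).1
  let Φ (g : ∀ i, {e // f e = i}) : {A // G.IsSpanningTree A} :=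
    ⟨(T g)ᶜ, G.isSpanningTree_compl_image hcyc hconn hcard g⟩
  rw [treeCount, ← Nat.card_pi]
  refine (Nat.card_eq_of_bijective Φ ⟨fun g g' hgg' => ?_, fun ⟨A, hA⟩ => ?_⟩).symm
  · have hTT : T g = T g' := compl_injective (congrArg Subtype.val hgg')
    funext i
    have hmem : (g i).1 ∈ T g' := hTT ▸ mem_image_of_mem _ (mem_univ i)
    obtain ⟨j, -, hj⟩ := mem_image.1 hmem
    obtain rfl : j = i := (g' j).2.symm.trans ((congrArg f hj).trans (g i).2)
    exact Subtype.ext hj.symm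
  · choose g hgA hgf using G.exists_notMem_of_isSpanningTree hcyc hf hA
    refine ⟨fun i => ⟨g i, hgf i⟩, Subtype.ext ?_⟩
    suffices T (fun i => ⟨g i, hgf i⟩) = Aᶜ by simp only [Φ, this, compl_compl]
    refine eq_of_subset_of_card_le (fun e he => ?_) ?_
    · obtain ⟨i, -, rfl⟩ := mem_image.1 he
      exact mem_compl.2 (hgA i)
    · rw [card_compl, card_univ_image_section]
      have := hA.2
      omega

end Multigraph

open Equiv Equiv.Perm

section Schreier

variable {S V : Type}

def schreierEdgePerm (σ : S → Perm V) : Perm (S × V) := prodShear (Equiv.refl S) σ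

theorem sameCycle_schreierEdgePerm [Finite V] (σ : S → Perm V) {s : S} {v w : V}
    (h : (σ s).SameCycle v w) : (schreierEdgePerm σ).SameCycle (s, v) (s, w) :=
  SameCycle.rel ((SameCycle.equivalence _).comap (s, ·))
    (fun x => (sameCycle_apply_right.2 (.refl _ _) : (schreierEdgePerm σ).SameCycle _
      (schreierEdgePerm σ (s, x)))) h

variable [Fintype S] [DecidableEq S] [Fintype V] [DecidableEq V]

def schreierGraph (σ : S → Perm V) : Multigraph V where
  Edge := S × V
  fintypeEdge := inferInstance
  decEqEdge := inferInstance
  inc e := s(e.2, σ e.1 e.2)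

theorem reachable_schreierGraph_of_sameCycle (σ : S → Perm V) (s : S) (v : V)
    {A : Finset (schreierGraph σ).Edge}
    (hA : ∀ w, (σ s).SameCycle v w → w ≠ v → ((s, w) : (schreierGraph σ).Edge) ∈ A) :
    ((schreierGraph σ).toSimple A).Reachable (σ s v) v := by
  have key (k : ℕ) : ((schreierGraph σ).toSimple A).Reachable (σ s v) ((σ s ^ (k + 1)) v) := by
    induction k with
    | zero => simp
    | succ k ih =>
      rw [pow_succ', mul_apply]
      by_cases hw : (σ s ^ (k + 1)) v = v
      · rw [hw]
      · exact ih.trans <| (schreierGraph σ).reachable_toSimple_of_mem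
          (hA _ (sameCycle_pow_right.2 (.refl _ _)) hw) rfl
  simpa [Nat.sub_add_cancel (orderOf_pos (σ s)), pow_orderOf_eq_one] using
    key (orderOf (σ s) - 1)

theorem treeCount_schreierGraph (σ : S → Perm V)
    (hconn : ((schreierGraph σ).toSimple univ).Connected)
    (hcard : Fintype.card S * Fintype.card V + 1 =
      Fintype.card V + (schreierEdgePerm σ).numCycles) :
    (schreierGraph σ).treeCount = (schreierEdgePerm σ).cycleLengthProd := by
  refine (schreierGraph σ).treeCount_eq_prod_card_fiber (ι := (schreierEdgePerm σ).Cycles)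
    (f := Quotient.mk _) ?_ Quotient.mk_surjective hconn ?_
  · rintro ⟨s, v⟩ A hA x y hxy
    have hreach := reachable_schreierGraph_of_sameCycle σ s v fun w hvw hwv =>
      hA (s, w) (Quotient.sound (sameCycle_schreierEdgePerm σ hvw).symm)
        fun h => hwv (congrArg Prod.snd h)
    rcases Sym2.eq_iff.1 hxy with ⟨rfl, rfl⟩ | ⟨rfl, rfl⟩
    exacts [hreach.symm, hreach]
  · change Fintype.card (S × V) + 1 = _
    rwa [Fintype.card_prod, ← Nat.card_eq_fintype_card (α := Cycles _)]

end Schreier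

theorem schreierEdgePerm_bool {V : Type} (σ : Bool → Perm V) :
    schreierEdgePerm σ =
      (boolProdEquivSum V).symm.permCongr (Perm.sumCongr (σ false) (σ true)) := by
  ext ⟨_ | _, v⟩ <;> rfl

/-- `inl w ↦ false :: w` and `inr w ↦ true :: w`. -/
def wordSumEquiv (n : ℕ) : (Fin n → Bool) ⊕ (Fin n → Bool) ≃ (Fin (n + 1) → Bool) :=
  (Equiv.boolProdEquivSum _).symm.trans (Fin.consEquiv fun _ => Bool)

theorem basA_succ (n : ℕ) :
    basA (n + 1) = wordSumEquiv n ∘ Sum.map (basB n) id ∘ (wordSumEquiv n).symm := by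
  funext v
  obtain ⟨u, rfl⟩ := (wordSumEquiv n).surjective v
  rcases u with w | w <;> simp only [Function.comp_apply, Equiv.symm_apply_apply] <;> rfl

theorem basB_succ (n : ℕ) :
    basB (n + 1) = wordSumEquiv n ∘ Sum.swap ∘ Sum.map (basA n) id ∘ (wordSumEquiv n).symm := by
  funext v
  obtain ⟨u, rfl⟩ := (wordSumEquiv n).surjective v
  rcases u with w | w <;> simp only [Function.comp_apply, Equiv.symm_apply_apply] <;> rfl

theorem basGen_bijective (n : ℕ) (s : Bool) : Function.Bijective (basGen n s) := by
  induction n generalizing s with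
  | zero => cases s <;> exact Function.bijective_id
  | succ n ih =>
    cases s
    · exact (basB_succ n ▸ (wordSumEquiv n).bijective.comp <|
        (Equiv.sumComm _ _).bijective.comp <|
        ((ih true).sumMap Function.bijective_id).comp (wordSumEquiv n).symm.bijective :)
    · exact (basA_succ n ▸ (wordSumEquiv n).bijective.comp <|
        ((ih false).sumMap Function.bijective_id).comp (wordSumEquiv n).symm.bijective :)

noncomputable def basPerm (n : ℕ) (s : Bool) : Perm (Fin n → Bool) :=
  Equiv.ofBijective _ (basGen_bijective n s)

theorem basilica_eq_schreierGraph (n : ℕ) : basilica n = schreierGraph (basPerm n) := rfl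

theorem basPerm_zero (s : Bool) : basPerm 0 s = 1 := Subsingleton.elim _ _

theorem basPerm_succ_true (n : ℕ) :
    basPerm (n + 1) true = (wordSumEquiv n).permCongr (Perm.sumCongr (basPerm n false) 1) := by
  ext v : 1
  simp [basPerm, basGen, basA_succ, permCongr_apply]

theorem basPerm_succ_false (n : ℕ) :
    basPerm (n + 1) false = (wordSumEquiv n).permCongr (swapSumCongr (basPerm n true)) := by
  ext v : 1
  simp [basPerm, basGen, basB_succ, permCongr_apply, swapSumCongr]

theorem numCycles_basPerm_succ_true (n : ℕ) :
    (basPerm (n + 1) true).numCycles = (basPerm n false).numCycles + 2 ^ n := by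
  rw [basPerm_succ_true, numCycles_permCongr, numCycles_sumCongr, numCycles_one]
  simp

theorem numCycles_basPerm_succ_false (n : ℕ) :
    (basPerm (n + 1) false).numCycles = (basPerm n true).numCycles := by
  rw [basPerm_succ_false, numCycles_permCongr, numCycles_swapSumCongr]

theorem cycleLengthProd_basPerm_succ_true (n : ℕ) :
    (basPerm (n + 1) true).cycleLengthProd = (basPerm n false).cycleLengthProd := by
  rw [basPerm_succ_true, cycleLengthProd_permCongr, cycleLengthProd_sumCongr,
    cycleLengthProd_one, mul_one]

theorem cycleLengthProd_basPerm_succ_false (n : ℕ) :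
    (basPerm (n + 1) false).cycleLengthProd =
      2 ^ (basPerm n true).numCycles * (basPerm n true).cycleLengthProd := by
  rw [basPerm_succ_false, cycleLengthProd_permCongr, cycleLengthProd_swapSumCongr]

theorem numCycles_basPerm_add (n : ℕ) :
    (basPerm n true).numCycles + (basPerm n false).numCycles = 2 ^ n + 1 := by
  induction n with
  | zero => simp [basPerm_zero, numCycles_one]
  | succ n ih =>
    rw [numCycles_basPerm_succ_true, numCycles_basPerm_succ_false, pow_succ]
    omega

theorem three_mul_numCycles_basPerm_true (n : ℕ) :
    3 * (basPerm n true).numCycles = 2 ^ (n + 1) + 1 + n % 2 := by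
  induction n with
  | zero => simp [basPerm_zero, numCycles_one]
  | succ n ih =>
    have := numCycles_basPerm_add n
    have h2 : 2 ^ (n + 1 + 1) = 4 * 2 ^ n := by ring
    rw [numCycles_basPerm_succ_true]
    omega

theorem six_mul_sum_numCycles_basPerm_true (n : ℕ) :
    6 * ∑ i ∈ range n, (basPerm i true).numCycles + 4 + n % 2 = 2 ^ (n + 2) + 3 * n := by
  induction n with
  | zero => simp
  | succ n ih =>
    have := three_mul_numCycles_basPerm_true n
    have h2 : 2 ^ (n + 2) = 4 * 2 ^ n := by ring
    have h3 : 2 ^ (n + 1 + 2) = 8 * 2 ^ n := by ring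
    rw [sum_range_succ]
    omega

theorem cycleLengthProd_basPerm_mul (n : ℕ) :
    (basPerm n true).cycleLengthProd * (basPerm n false).cycleLengthProd =
      2 ^ ∑ i ∈ range n, (basPerm i true).numCycles := by
  induction n with
  | zero => simp [basPerm_zero, cycleLengthProd_one]
  | succ n ih =>
    rw [cycleLengthProd_basPerm_succ_true, cycleLengthProd_basPerm_succ_false,
      sum_range_succ, pow_add, ← ih]
    ring

theorem connected_basilica (n : ℕ) : ((basilica n).toSimple univ).Connected := by
  induction n with
  | zero =>
    exact (SimpleGraph.connected_iff_exists_forall_reachable _).2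
      ⟨Fin.elim0, fun w => Subsingleton.elim (α := Fin 0 → Bool) Fin.elim0 w ▸ .rfl⟩
  | succ n ih =>
    let G := (basilica (n + 1)).toSimple univ
    have hgen (s : Bool) (v : Fin (n + 1) → Bool) : G.Reachable v (basGen (n + 1) s v) :=
      (basilica (n + 1)).reachable_toSimple_of_mem (mem_univ (s, v)) rfl
    have hflip (w : Fin n → Bool) : G.Reachable (Fin.cons true w) (Fin.cons false w) :=
      hgen false _
    have hstep (s : Bool) (w : Fin n → Bool) :
        G.Reachable (Fin.cons false w) (Fin.cons false (basGen n s w)) := by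
      cases s
      · exact hgen true _
      · exact (hgen false _).trans (hflip _)
    have hlift {w w' : Fin n → Bool} (h : ((basilica n).toSimple univ).Reachable w w') :
        G.Reachable (Fin.cons false w) (Fin.cons false w') := by
      refine h.lift (fun w => (Fin.cons false w : Fin (n + 1) → Bool)) fun x y hxy => ?_
      obtain ⟨-, ⟨s, v⟩, -, hinc⟩ := (basilica n).toSimple_adj.1 hxy
      rcases Sym2.eq_iff.1 hinc with ⟨rfl, rfl⟩ | ⟨rfl, rfl⟩
      exacts [hstep s v, (hstep s v).symm]
    obtain ⟨w₀, hw₀⟩ := (SimpleGraph.connected_iff_exists_forall_reachable _).1 ih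
    refine (SimpleGraph.connected_iff_exists_forall_reachable _).2 ⟨Fin.cons false w₀, fun v => ?_⟩
    obtain ⟨u, rfl⟩ := (wordSumEquiv n).surjective v
    rcases u with w | w
    exacts [hlift (hw₀ w), (hlift (hw₀ w)).trans (hflip w).symm]

theorem treeCount_basilica (n : ℕ) :
    (basilica n).treeCount = 2 ^ ∑ i ∈ range n, (basPerm i true).numCycles := by
  have hcard : Fintype.card Bool * Fintype.card (Fin n → Bool) + 1 =
      Fintype.card (Fin n → Bool) + (schreierEdgePerm (basPerm n)).numCycles := by
    rw [schreierEdgePerm_bool, numCycles_permCongr, numCycles_sumCongr]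
    have := numCycles_basPerm_add n
    simp only [Fintype.card_bool, Fintype.card_fun, Fintype.card_fin]
    omega
  rw [basilica_eq_schreierGraph, treeCount_schreierGraph (basPerm n) (connected_basilica n) hcard,
    schreierEdgePerm_bool, cycleLengthProd_permCongr, cycleLengthProd_sumCongr, mul_comm,
    cycleLengthProd_basPerm_mul]

open Filter Topology

theorem tendsto_div_two_pow_of_six_mul {s : ℕ → ℕ}
    (hs : ∀ n, 6 * s n + 4 + n % 2 = 2 ^ (n + 2) + 3 * n) :
    Tendsto (fun n => (s n : ℝ) / 2 ^ n) atTop (𝓝 (2 / 3)) := by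
  have hlower : Tendsto (fun n : ℕ => 2 / 3 - 5 / 6 * ((1 : ℝ) / 2) ^ n) atTop (𝓝 (2 / 3)) := by
    simpa using (tendsto_pow_atTop_nhds_zero_of_lt_one (r := (1 / 2 : ℝ)) (by norm_num)
      (by norm_num)).const_mul (5 / 6) |>.const_sub (2 / 3)
  have hupper : Tendsto (fun n : ℕ => 2 / 3 + (n : ℝ) ^ 1 / 2 ^ n / 2) atTop (𝓝 (2 / 3)) := by
    simpa using ((tendsto_pow_const_div_const_pow_of_one_lt 1 (one_lt_two (α := ℝ))).div_const
      2).const_add (2 / 3)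
  refine tendsto_of_tendsto_of_tendsto_of_le_of_le hlower hupper (fun n => ?_) (fun n => ?_)
  all_goals
    have hR : (6 * s n + 4 + (n % 2 : ℕ) : ℝ) = 4 * 2 ^ n + 3 * n := by
      exact_mod_cast (hs n).trans (by ring)
    have hr : ((n % 2 : ℕ) : ℝ) ≤ 1 := by exact_mod_cast Nat.le_of_lt_succ (Nat.mod_lt n two_pos)
    have hp : (0 : ℝ) < 2 ^ n := by positivity
    dsimp only
    simp only [div_pow, one_pow, pow_one]
    field_simp
    nlinarith

/-- The asymptotic growth constant of the spanning trees of the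
sequence `{B_n}` of Schreier graphs of the Basilica group equals `(2/3)·log 2`:
`lim_{n→∞} (log τ(B_n)) / |V(B_n)| = (2/3)·log 2`, where `|V(B_n)| = 2^n`. -/
theorem asymptotic_growth_basilica :
    Filter.Tendsto
      (fun n : ℕ => Real.log ((basilica n).treeCount : ℝ) / ((2 : ℝ) ^ n))
      Filter.atTop (nhds ((2 / 3) * Real.log 2)) := by
  refine ((tendsto_div_two_pow_of_six_mul six_mul_sum_numCycles_basPerm_true).mul_const
    (Real.log 2)).congr fun n => ?_
  rw [treeCount_basilica, Nat.cast_pow, Real.log_pow, Nat.cast_ofNat]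
  ring
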